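/- For all 1 ≤ r, s, s' ≤ p, all 1 ≤ i ≤ m, all 1 ≤ a, b ≤ d', and all integers k, l ≥ 0, the commutator in End_ℂ(P) satisfies ⁅F_a(r,s;k), K_b(i,s';l)⁆ = −δ_{a,b}·δ_{r,s'}·K_a(i,s;k+l). (This is part of the homomorphism property established in Proposition 4.2 of the paper, corresponding to the Takiff relation [E^r_s ⊗ t̄_{w_a}^k, E^{p+q+i}_{s'} ⊗ t̄_{w_b}^l] = −δ_{a,b} δ_{r,s'} E^{p+q+i}_s ⊗ t̄_{w_a}^{k+l} in the purely even case.) -/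

import Mathlib

open MvPolynomial

/-! Each summand of `F_a` is `∂_y ∘ y` and each summand of `K_b` is `x ∘ y`, so by the Leibniz
rule their commutator is `x ∘ y`, or `0` unless the differentiated `y` is the one `K_b` multiplies
by. The superscripts of block `a` form the interval `[d_a, d_a + ξ_a)`, and these intervals are
disjoint, so only `a = b` contributes; there the surviving pairs are `β = α + k`, which sum to
`K_a(i,s;k+l)`. -/

/-- Multiplication by the variable `v`, as a `ℂ`-linear endomorphism of the
polynomial ring. -/
noncomputable def mulOp {σ : Type*} (v : σ) :
    Module.End ℂ (MvPolynomial σ ℂ) :=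
  LinearMap.mulLeft ℂ (X v)

/-- The partial derivative with respect to the variable `v`, as a `ℂ`-linear endomorphism
of the polynomial ring. -/
noncomputable def derOp {σ : Type*} (v : σ) :
    Module.End ℂ (MvPolynomial σ ℂ) :=
  (pderiv v).toLinearMap

/-- The variable `y^α_r` of the Fock space `MvPolynomial (Fin d × (Fin p ⊕ Fin m)) ℂ`,
with superscript index `α` (0-based, a natural number) and subscript `r : Fin p`. -/
def yvar (d p m : ℕ) (α : ℕ) (h : α < d) (r : Fin p) : Fin d × (Fin p ⊕ Fin m) :=
  (⟨α, h⟩, Sum.inl r)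

/-- The variable `x^α_i`, with superscript index `α` (0-based) and subscript `i : Fin m`. -/
def xvar (d p m : ℕ) (α : ℕ) (h : α < d) (i : Fin m) : Fin d × (Fin p ⊕ Fin m) :=
  (⟨α, h⟩, Sum.inr i)

/-- `F_a(r,s;k) = -Σ_{α=D+1}^{D+ξ-k} ∂_{y^{α+k}_r} ∘ y^α_s`, where `D = d_a`, `ξ = ξ_a`
(the superscripts are written 0-based, so `α` runs over `D, D+1, …, D+ξ-k-1`). -/
noncomputable def Fop (d p m : ℕ) (D ξ : ℕ) (r s : Fin p) (k : ℕ) :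
    Module.End ℂ (MvPolynomial (Fin d × (Fin p ⊕ Fin m)) ℂ) :=
  - ∑ α ∈ Finset.range (ξ - k),
      if h : D + α + k < d then
        derOp (yvar d p m (D + α + k) h r) * mulOp (yvar d p m (D + α) (by omega) s)
      else 0

/-- `H_a(r,j;k) = Σ_{α=D+1}^{D+ξ-k} ∂_{y^{α+k}_r} ∘ ∂_{x^α_j}`, where `D = d_a`,
`ξ = ξ_a`. -/
noncomputable def Hop (d p m : ℕ) (D ξ : ℕ) (r : Fin p) (j : Fin m) (k : ℕ) :
    Module.End ℂ (MvPolynomial (Fin d × (Fin p ⊕ Fin m)) ℂ) :=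
  ∑ α ∈ Finset.range (ξ - k),
      if h : D + α + k < d then
        derOp (yvar d p m (D + α + k) h r) * derOp (xvar d p m (D + α) (by omega) j)
      else 0

/-- `K_a(i,s;k) = -Σ_{α=D+1}^{D+ξ-k} x^{α+k}_i ∘ y^α_s`, where `D = d_a`, `ξ = ξ_a`. -/
noncomputable def Kop (d p m : ℕ) (D ξ : ℕ) (i : Fin m) (s : Fin p) (k : ℕ) :
    Module.End ℂ (MvPolynomial (Fin d × (Fin p ⊕ Fin m)) ℂ) :=
  - ∑ α ∈ Finset.range (ξ - k),
      if h : D + α + k < d then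
        mulOp (xvar d p m (D + α + k) h i) * mulOp (yvar d p m (D + α) (by omega) s)
      else 0

/-- `G_a(i,j;k) = Σ_{α=D+1}^{D+ξ-k} x^{α+k}_i ∘ ∂_{x^α_j}`, where `D = d_a`, `ξ = ξ_a`. -/
noncomputable def Gop (d p m : ℕ) (D ξ : ℕ) (i j : Fin m) (k : ℕ) :
    Module.End ℂ (MvPolynomial (Fin d × (Fin p ⊕ Fin m)) ℂ) :=
  ∑ α ∈ Finset.range (ξ - k),
      if h : D + α + k < d then
        mulOp (xvar d p m (D + α + k) h i) * derOp (xvar d p m (D + α) (by omega) j)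
      else 0

attribute [local instance] LieRing.ofAssociativeRing

section Operators

variable {σ : Type*}

lemma mulOp_mul_mulOp (w z : σ) :
    mulOp w * mulOp z = LinearMap.mulLeft ℂ (X w * X z : MvPolynomial σ ℂ) :=
  LinearMap.ext fun f => by simp [mulOp]

lemma lie_derOp_mul_mulLeft_mulLeft (u : σ) (q₁ q₂ : MvPolynomial σ ℂ) :
    ⁅derOp u * LinearMap.mulLeft ℂ q₁, LinearMap.mulLeft ℂ q₂⁆
      = LinearMap.mulLeft ℂ (pderiv u q₂ * q₁) :=
  LinearMap.ext fun f => by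
    simp only [Ring.lie_def, LinearMap.sub_apply, Module.End.mul_apply, LinearMap.mulLeft_apply,
      derOp, Derivation.coeFn_coe, pderiv_mul]
    ring

lemma lie_derOp_mulOp_mulOp_mulOp [DecidableEq σ] {u w : σ} (v z : σ) (hwu : w ≠ u) :
    ⁅derOp u * mulOp v, mulOp w * mulOp z⁆ = if u = z then mulOp w * mulOp v else 0 := by
  rw [mulOp_mul_mulOp w z, mulOp_mul_mulOp w v, mulOp, lie_derOp_mul_mulLeft_mulLeft, pderiv_mul,
    pderiv_X_of_ne hwu, zero_mul, zero_add]
  split_ifs with huz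
  · rw [huz, pderiv_X_self, mul_one]
  · rw [pderiv_X_of_ne (Ne.symm huz), mul_zero, zero_mul, LinearMap.mulLeft_zero_eq_zero]

end Operators

lemma Finset.sum_range_sum_range_ite_add_eq {M : Type*} [AddCommMonoid M] (A B k : ℕ)
    (f : ℕ → ℕ → M) :
    ∑ α ∈ Finset.range A, ∑ β ∈ Finset.range B, (if α + k = β then f α β else 0)
      = ∑ α ∈ Finset.range (min A (B - k)), f α (α + k) := by
  simp only [Finset.sum_ite_eq, ← Finset.sum_filter]
  congr 1
  ext α
  simp only [Finset.mem_filter, Finset.mem_range]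
  omega

section Blocks

variable {ι : Type*} [Fintype ι] [LinearOrder ι] (ξ : ι → ℕ)

lemma sum_filter_lt_add_le_sum_filter_lt {c e : ι} (hce : c < e) :
    ∑ b ∈ Finset.univ.filter (· < c), ξ b + ξ c ≤ ∑ b ∈ Finset.univ.filter (· < e), ξ b := by
  rw [add_comm, ← Finset.sum_insert (by simp)]
  refine Finset.sum_le_sum_of_subset fun b hb => ?_
  simp only [Finset.mem_insert, Finset.mem_filter, Finset.mem_univ, true_and] at hb ⊢
  rcases hb with rfl | hb
  exacts [hce, hb.trans hce]

lemma sum_filter_lt_add_le_sum (c : ι) :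
    ∑ b ∈ Finset.univ.filter (· < c), ξ b + ξ c ≤ ∑ b, ξ b := by
  rw [add_comm, ← Finset.sum_insert (by simp)]
  exact Finset.sum_le_sum_of_subset (Finset.subset_univ _)

end Blocks

section FockOperators

variable (d p m : ℕ)

/-- `∂_{y^n_r} ∘ y^{n'}_s`, or `0` if `n` or `n'` is out of range. -/
noncomputable def derYMulYOp (n n' : ℕ) (r s : Fin p) :
    Module.End ℂ (MvPolynomial (Fin d × (Fin p ⊕ Fin m)) ℂ) :=
  if h : n < d ∧ n' < d then derOp (yvar d p m n h.1 r) * mulOp (yvar d p m n' h.2 s) else 0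

/-- `x^n_i ∘ y^{n'}_s`, or `0` if `n` or `n'` is out of range. -/
noncomputable def mulXMulYOp (n n' : ℕ) (i : Fin m) (s : Fin p) :
    Module.End ℂ (MvPolynomial (Fin d × (Fin p ⊕ Fin m)) ℂ) :=
  if h : n < d ∧ n' < d then mulOp (xvar d p m n h.1 i) * mulOp (yvar d p m n' h.2 s) else 0

lemma Fop_eq_neg_sum (D ξ : ℕ) (r s : Fin p) (k : ℕ) :
    Fop d p m D ξ r s k
      = -∑ α ∈ Finset.range (ξ - k), derYMulYOp d p m (D + α + k) (D + α) r s := by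
  unfold Fop derYMulYOp
  congr 1
  refine Finset.sum_congr rfl fun α _ => ?_
  by_cases h : D + α + k < d
  · rw [dif_pos h, dif_pos ⟨h, by omega⟩]
  · rw [dif_neg h, dif_neg (h ∘ And.left)]

lemma Kop_eq_neg_sum (D ξ : ℕ) (i : Fin m) (s : Fin p) (k : ℕ) :
    Kop d p m D ξ i s k
      = -∑ α ∈ Finset.range (ξ - k), mulXMulYOp d p m (D + α + k) (D + α) i s := by
  unfold Kop mulXMulYOp
  congr 1
  refine Finset.sum_congr rfl fun α _ => ?_
  by_cases h : D + α + k < d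
  · rw [dif_pos h, dif_pos ⟨h, by omega⟩]
  · rw [dif_neg h, dif_neg (h ∘ And.left)]

variable {d p m}

lemma lie_derYMulYOp_mulXMulYOp {n : ℕ} (hn : n < d) (n' e e' : ℕ) (r s s' : Fin p) (i : Fin m) :
    ⁅derYMulYOp d p m n n' r s, mulXMulYOp d p m e e' i s'⁆
      = if n = e' ∧ r = s' then mulXMulYOp d p m e n' i s else 0 := by
  unfold derYMulYOp mulXMulYOp
  by_cases hn' : n' < d
  swap
  · rw [dif_neg (by omega), zero_lie, dif_neg (by omega), ite_self]
  by_cases he : e < d ∧ e' < d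
  swap
  · rw [dif_neg he, lie_zero, eq_comm, ite_eq_right_iff]
    rintro ⟨rfl, -⟩
    exact dif_neg (by omega)
  rw [dif_pos ⟨hn, hn'⟩, dif_pos he, lie_derOp_mulOp_mulOp_mulOp _ _ (by simp [xvar, yvar]),
    dif_pos ⟨he.1, hn'⟩]
  refine if_congr ?_ rfl rfl
  simp [yvar, Fin.ext_iff]

end FockOperators

section Commutator

variable {d p m : ℕ}

lemma lie_Fop_Kop {D₁ ξ₁ : ℕ} (h₁ : D₁ + ξ₁ ≤ d) (D₂ ξ₂ : ℕ) (r s s' : Fin p) (i : Fin m)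
    (k l : ℕ) :
    ⁅Fop d p m D₁ ξ₁ r s k, Kop d p m D₂ ξ₂ i s' l⁆
      = ∑ α ∈ Finset.range (ξ₁ - k), ∑ β ∈ Finset.range (ξ₂ - l),
          if D₁ + α + k = D₂ + β ∧ r = s' then mulXMulYOp d p m (D₂ + β + l) (D₁ + α) i s
          else 0 := by
  rw [Fop_eq_neg_sum, Kop_eq_neg_sum, neg_lie, lie_neg, neg_neg, sum_lie_sum]
  refine Finset.sum_congr rfl fun α hα => Finset.sum_congr rfl fun β _ => ?_
  rw [Finset.mem_range] at hα
  exact lie_derYMulYOp_mulXMulYOp (by omega) _ _ _ _ _ _ _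

lemma lie_Fop_Kop_of_disjoint {D₁ ξ₁ D₂ ξ₂ : ℕ} (h₁ : D₁ + ξ₁ ≤ d)
    (hdisj : D₁ + ξ₁ ≤ D₂ ∨ D₂ + ξ₂ ≤ D₁) (r s s' : Fin p) (i : Fin m) (k l : ℕ) :
    ⁅Fop d p m D₁ ξ₁ r s k, Kop d p m D₂ ξ₂ i s' l⁆ = 0 := by
  rw [lie_Fop_Kop h₁]
  refine Finset.sum_eq_zero fun α hα => Finset.sum_eq_zero fun β hβ => if_neg ?_
  rw [Finset.mem_range] at hα hβ
  omega

lemma lie_Fop_Kop_self {D ξ : ℕ} (h : D + ξ ≤ d) (r s s' : Fin p) (i : Fin m) (k l : ℕ) :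
    ⁅Fop d p m D ξ r s k, Kop d p m D ξ i s' l⁆
      = if r = s' then -Kop d p m D ξ i s (k + l) else 0 := by
  rw [lie_Fop_Kop h]
  split_ifs with hrs
  · simp only [hrs, and_true, add_assoc, add_right_inj,
      Finset.sum_range_sum_range_ite_add_eq, Kop_eq_neg_sum, neg_neg]
    congr 2
    omega
  · exact Finset.sum_eq_zero fun _ _ => Finset.sum_eq_zero fun _ _ => if_neg (hrs ∘ And.right)

end Commutator

theorem stmt12_general (p m : ℕ) (d' : ℕ)
    (ξ : Fin d' → ℕ) (d : ℕ) (hd : d = ∑ a, ξ a)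
    (D : Fin d' → ℕ)
    (hD : ∀ a, D a = ∑ b ∈ Finset.univ.filter (fun b => b < a), ξ b)
    (a b : Fin d') (r s s' : Fin p) (i : Fin m) (k l : ℕ) :
    Fop d p m (D a) (ξ a) r s k * Kop d p m (D b) (ξ b) i s' l
      - Kop d p m (D b) (ξ b) i s' l * Fop d p m (D a) (ξ a) r s k
    = - (if a = b then
          (if r = s' then Kop d p m (D a) (ξ a) i s (k + l) else 0)
        else 0) := by
  have hle : ∀ c, D c + ξ c ≤ d := fun c => hd ▸ hD c ▸ sum_filter_lt_add_le_sum ξ c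
  rw [← Ring.lie_def]
  rcases lt_trichotomy a b with hab | rfl | hab
  · rw [if_neg hab.ne, neg_zero, lie_Fop_Kop_of_disjoint (hle a)
      (.inl (hD a ▸ hD b ▸ sum_filter_lt_add_le_sum_filter_lt ξ hab))]
  · rw [if_pos rfl, lie_Fop_Kop_self (hle a), apply_ite Neg.neg, neg_zero]
  · rw [if_neg hab.ne', neg_zero, lie_Fop_Kop_of_disjoint (hle a)
      (.inr (hD a ▸ hD b ▸ sum_filter_lt_add_le_sum_filter_lt ξ hab))]

/-- `⁅F_a(r,s;k), K_b(i,s';l)⁆ = -δ_{ab} δ_{r s'} K_a(i,s;k+l)`. -/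
theorem stmt12 (p m : ℕ) (hpm : 1 ≤ p + m) (d' : ℕ) (hd' : 1 ≤ d')
    (ξ : Fin d' → ℕ) (hξ : ∀ a, 0 < ξ a) (d : ℕ) (hd : d = ∑ a, ξ a)
    (D : Fin d' → ℕ)
    (hD : ∀ a, D a = ∑ b ∈ Finset.univ.filter (fun b => b < a), ξ b)
    (a b : Fin d') (r s s' : Fin p) (i : Fin m) (k l : ℕ) :
    Fop d p m (D a) (ξ a) r s k * Kop d p m (D b) (ξ b) i s' l
      - Kop d p m (D b) (ξ b) i s' l * Fop d p m (D a) (ξ a) r s k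
    = - (if a = b then
          (if r = s' then Kop d p m (D a) (ξ a) i s (k + l) else 0)
        else 0) :=
  stmt12_general p m d' ξ d hd D hD a b r s s' i k l
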